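/- arXiv:2204.09174 — 3 statements merged into one kernel-verified Lean document; each statement's English description precedes it below -/
import Mathlib

section
/- Let W be a Coxeter group, u ≤ v in Bruhat order, and s a simple reflection with s a left descent of v but not a left descent of u. Then left multiplication by s maps the Bruhat interval [u,v] bijectively to itself, and preserves the relation 'x and y differ by right multiplication by a reflection'. In other words, L_s restricts to a graph automorphism of the undirected Bruhat graph on [u,v]. -/
open CoxeterSystem

variable {B W : Type*} [Group W] {M : CoxeterMatrix B}

/-- One step of Bruhat order: multiply on the right by a reflection, increasing length. -/
def bruhatStep (cs : CoxeterSystem M W) (x y : W) : Prop :=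
  ∃ t : W, cs.IsReflection t ∧ y = x * t ∧ cs.length x < cs.length y

/-- Bruhat order on a Coxeter group. -/
def bruhatLE (cs : CoxeterSystem M W) : W → W → Prop :=
  Relation.ReflTransGen (bruhatStep cs)

/-- Strict Bruhat order. -/
def bruhatLT (cs : CoxeterSystem M W) (x y : W) : Prop :=
  bruhatLE cs x y ∧ x ≠ y

/-- Cover relation in Bruhat order. -/
def bruhatCovBy (cs : CoxeterSystem M W) (x y : W) : Prop :=
  bruhatLE cs x y ∧ cs.length y = cs.length x + 1

/-- The Bruhat interval `[u, v]`. -/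
def bruhatInterval (cs : CoxeterSystem M W) (u v : W) : Set W :=
  {x | bruhatLE cs u x ∧ bruhatLE cs x v}

/-- The support of `w`: simple reflections appearing in a reduced word for `w`. -/
def supp (cs : CoxeterSystem M W) (w : W) : Set B :=
  {i | ∃ ω : List B, cs.IsReduced ω ∧ w = cs.wordProd ω ∧ i ∈ ω}

/-!
The only nontrivial point is that `x ↦ s x` maps `[u, v]` into itself; adjacency is preserved
because left multiplication commutes with right multiplication by reflections. If `s x < x`, then
`s x ≤ x ≤ v`, and `u ≤ s x` is the lifting property for `u ≤ x` with `s u > u`; if `s x > x`, then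
`u ≤ x ≤ s x`, and `s x ≤ v` is the lifting property for `x ≤ v` with `s v < v`. Both instances
follow by induction along a Bruhat chain from the one-step statement: if `u < t u` and `u < s u`,
then `s u = t u` or `s u ≤ s t u`. The hard case `ℓ(t u) = ℓ(u) + 1` needs the strong exchange
property, which is derived as in Björner–Brenti from the action of `W` on `W × ZMod 2` in which
`s` sends `(t, z)` to `(s t s, z + [t = s])`: the second coordinate of `w • (t, 0)` counts, mod 2,
the occurrences of `t` in the right inversion sequence of any word for `w`, and it is `1` exactly
when `ℓ(w t) < ℓ(w)`.
-/

theorem conj_eq_iff_eq_conj {G : Type*} [Group G] (g x y : G) :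
    g * x * g⁻¹ = y ↔ x = g⁻¹ * y * g := by
  constructor <;> rintro rfl <;> group

namespace CoxeterSystem

open scoped Classical

variable (cs : CoxeterSystem M W)

local prefix:100 "s" => cs.simple
local prefix:100 "π" => cs.wordProd
local prefix:100 "ℓ" => cs.length
local prefix:100 "ris" => cs.rightInvSeq

noncomputable def parityPermFun (i : B) (p : W × ZMod 2) : W × ZMod 2 :=
  (s i * p.1 * s i, p.2 + if p.1 = s i then 1 else 0)

theorem simple_conj_eq_simple_iff (i : B) (t : W) : s i * t * s i = s i ↔ t = s i := by
  simpa only [inv_simple, simple_mul_simple_cancel_right] using conj_eq_iff_eq_conj (s i) t (s i)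

theorem parityPermFun_involutive (i : B) : Function.Involutive (cs.parityPermFun i) := by
  rintro ⟨t, z⟩
  simp only [parityPermFun, simple_conj_eq_simple_iff, add_assoc, ← two_mul, CharTwo.two_eq_zero,
    zero_mul, add_zero, Prod.mk.injEq, and_true]
  simp [mul_assoc]

noncomputable def parityPerm (i : B) : Equiv.Perm (W × ZMod 2) :=
  (cs.parityPermFun_involutive i).toPerm

theorem parityPerm_apply (i : B) (t : W) (z : ZMod 2) :
    cs.parityPerm i (t, z) = (s i * t * s i, z + if t = s i then 1 else 0) := rfl

theorem inv_simple_mul_simple_pow (i j : B) (k : ℕ) :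
    ((s i * s j) ^ k)⁻¹ = s j * (s i * s j) ^ k * s j := by
  have h : s j * (s i * s j) * (s j)⁻¹ = (s i * s j)⁻¹ := by
    simp [mul_assoc]
  rw [← inv_pow, ← h, conj_pow, inv_simple]

theorem parityPerm_mul_pow_apply (i j : B) (k : ℕ) (t : W) (z : ZMod 2) :
    ((cs.parityPerm i * cs.parityPerm j) ^ k) (t, z) =
      ((s i * s j) ^ k * t * ((s i * s j) ^ k)⁻¹,
        z + ∑ n ∈ Finset.range (2 * k), if t = s j * (s i * s j) ^ n then 1 else 0) := by
  induction k with
  | zero => simp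
  | succ k ih =>
    set q := s i * s j
    have hq : (q ^ k)⁻¹ = s j * q ^ k * s j := cs.inv_simple_mul_simple_pow i j k
    have h₁ : q ^ k * t * (q ^ k)⁻¹ = s j ↔ t = s j * q ^ (2 * k) := by
      rw [conj_eq_iff_eq_conj, hq]
      simp [mul_assoc, two_mul, pow_add]
    have h₂ : s j * (q ^ k * t * (q ^ k)⁻¹) * s j = s i ↔ t = s j * q ^ (2 * k + 1) := by
      have hg : s j * (q ^ k * t * (q ^ k)⁻¹) * s j = (s j * q ^ k) * t * (s j * q ^ k)⁻¹ :=
        by simp [mul_assoc]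
      rw [hg, conj_eq_iff_eq_conj, mul_inv_rev, hq, show 2 * k + 1 = k + (1 + k) by ring,
        pow_add, pow_add, pow_one]
      simp [mul_assoc, q]
    rw [pow_succ', Equiv.Perm.mul_apply, ih, Equiv.Perm.mul_apply, parityPerm_apply,
      parityPerm_apply, if_congr h₁ rfl rfl, if_congr h₂ rfl rfl, Prod.mk.injEq]
    constructor
    · simp only [pow_succ', mul_inv_rev, mul_assoc, inv_simple, q]
    · rw [show 2 * (k + 1) = 2 * k + 1 + 1 by ring, Finset.sum_range_succ, Finset.sum_range_succ]
      ring

theorem isLiftable_parityPerm : M.IsLiftable cs.parityPerm := by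
  intro i j
  ext ⟨t, z⟩ : 1
  have hm := cs.simple_mul_simple_pow i j
  have hperiodic : ∀ n, (if t = s j * (s i * s j) ^ (M i j + n) then (1 : ZMod 2) else 0) =
      if t = s j * (s i * s j) ^ n then 1 else 0 := by
    simp [pow_add, hm]
  rw [parityPerm_mul_pow_apply, hm, two_mul, Finset.sum_range_add]
  simp [hperiodic, CharTwo.add_self_eq_zero]

noncomputable def parityRep : W →* Equiv.Perm (W × ZMod 2) :=
  cs.lift ⟨cs.parityPerm, cs.isLiftable_parityPerm⟩

theorem parityRep_wordProd_apply (ω : List B) (t : W) (z : ZMod 2) :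
    cs.parityRep (π ω) (t, z) = (π ω * t * (π ω)⁻¹, z + ((ris ω).count t : ZMod 2)) := by
  induction ω generalizing t z with
  | nil => simp
  | cons i ω ih =>
    rw [wordProd_cons, map_mul, Equiv.Perm.mul_apply, ih, parityRep, lift_apply_simple,
      parityPerm_apply, rightInvSeq, List.count_cons, conj_eq_iff_eq_conj, Prod.mk.injEq]
    constructor
    · simp [mul_assoc]
    · simp only [beq_iff_eq, Nat.cast_add, Nat.cast_ite, Nat.cast_one, Nat.cast_zero, add_assoc,
        @eq_comm _ t]

noncomputable def inversionParity (w t : W) : ZMod 2 := (cs.parityRep w (t, 0)).2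

theorem inversionParity_wordProd (ω : List B) (t : W) :
    cs.inversionParity (π ω) t = (ris ω).count t := by
  rw [inversionParity, parityRep_wordProd_apply, zero_add]

theorem parityRep_apply (w t : W) (z : ZMod 2) :
    cs.parityRep w (t, z) = (w * t * w⁻¹, z + cs.inversionParity w t) := by
  obtain ⟨ω, rfl⟩ := cs.wordProd_surjective w
  rw [parityRep_wordProd_apply, inversionParity_wordProd]

theorem inversionParity_mul (x y t : W) :
    cs.inversionParity (x * y) t =
      cs.inversionParity y t + cs.inversionParity x (y * t * y⁻¹) := by
  rw [inversionParity, map_mul, Equiv.Perm.mul_apply, parityRep_apply cs y, zero_add,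
    parityRep_apply]

theorem inversionParity_inv (w t : W) :
    cs.inversionParity w⁻¹ t = cs.inversionParity w (w⁻¹ * t * w) := by
  have h := cs.inversionParity_mul w w⁻¹ t
  have h₁ : cs.inversionParity 1 t = 0 := by simp [inversionParity]
  rwa [mul_inv_cancel, inv_inv, h₁, eq_comm, CharTwo.add_eq_zero] at h

theorem inversionParity_simple_self (i : B) : cs.inversionParity (s i) (s i) = 1 := by
  simpa using cs.inversionParity_wordProd [i] (s i)

theorem length_mul_lt_of_inversionParity_eq_one {w t : W} (h : cs.inversionParity w t = 1) :
    ℓ (w * t) < ℓ w := by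
  obtain ⟨ω, hω, rfl⟩ := cs.exists_isReduced w
  have ht : t ∈ ris ω := by
    rw [inversionParity_wordProd] at h
    by_contra hn
    simp [List.count_eq_zero_of_not_mem hn] at h
  exact (cs.isRightInversion_of_mem_rightInvSeq hω ht).2

namespace IsReflection

variable {cs} {t : W}

theorem inversionParity_self (ht : cs.IsReflection t) : cs.inversionParity t t = 1 := by
  obtain ⟨w, i, rfl⟩ := ht
  have hconj : w⁻¹ * (w * s i * w⁻¹) * w = s i := by group
  rw [cs.inversionParity_mul (w * s i), inv_inv, hconj, cs.inversionParity_inv, hconj,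
    cs.inversionParity_mul, inversionParity_simple_self, mul_inv_cancel_right, add_left_comm,
    CharTwo.add_self_eq_zero, add_zero]

theorem inversionParity_eq_one_of_length_mul_lt (ht : cs.IsReflection t) {w : W}
    (h : ℓ (w * t) < ℓ w) : cs.inversionParity w t = 1 := by
  by_contra hne
  have h₀ : cs.inversionParity w t = 0 := (by decide : ∀ a : ZMod 2, a ≠ 1 → a = 0) _ hne
  have h₁ : cs.inversionParity (w * t) t = 1 := by
    rw [inversionParity_mul, mul_inv_cancel_right, ht.inversionParity_self, h₀, add_zero]
  have h₂ := cs.length_mul_lt_of_inversionParity_eq_one h₁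
  rw [mul_assoc, ht.mul_self, mul_one] at h₂
  omega

theorem mem_rightInvSeq_of_length_mul_lt (ht : cs.IsReflection t) {ω : List B}
    (h : ℓ (π ω * t) < ℓ (π ω)) : t ∈ ris ω := by
  have h₁ := ht.inversionParity_eq_one_of_length_mul_lt h
  rw [inversionParity_wordProd] at h₁
  by_contra hn
  simp [List.count_eq_zero_of_not_mem hn] at h₁

theorem exists_wordProd_eraseIdx_eq (ht : cs.IsReflection t) {ω : List B}
    (h : ℓ (π ω * t) < ℓ (π ω)) : ∃ j < ω.length, π (ω.eraseIdx j) = π ω * t := by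
  obtain ⟨j, hj, rfl⟩ := List.getElem_of_mem (ht.mem_rightInvSeq_of_length_mul_lt h)
  rw [length_rightInvSeq] at hj
  refine ⟨j, hj, ?_⟩
  rw [← wordProd_mul_getD_rightInvSeq, List.getD_eq_getElem]

end IsReflection

end CoxeterSystem

section BruhatOrder

variable (cs : CoxeterSystem M W)

local prefix:100 "s" => cs.simple
local prefix:100 "π" => cs.wordProd
local prefix:100 "ℓ" => cs.length

theorem bruhatStep.exists_reflection_mul {x y : W} (h : bruhatStep cs x y) :
    ∃ t, cs.IsReflection t ∧ y = t * x ∧ ℓ x < ℓ y := by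
  obtain ⟨t, ht, rfl, hl⟩ := h
  exact ⟨x * t * x⁻¹, ht.conj x, by group, hl⟩

theorem bruhatLE_reflection_mul {x t : W} (ht : cs.IsReflection t) (h : ℓ x < ℓ (t * x)) :
    bruhatLE cs x (t * x) := by
  refine Relation.ReflTransGen.single ⟨x⁻¹ * t * x, ?_, by group, h⟩
  simpa using ht.conj x⁻¹

theorem bruhatLE_simple_mul {x : W} {i : B} (h : ¬ cs.IsLeftDescent x i) :
    bruhatLE cs x (s i * x) :=
  bruhatLE_reflection_mul cs (cs.isReflection_simple i) (by rw [not_isLeftDescent_iff] at h; omega)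

theorem simple_mul_bruhatLE {x : W} {i : B} (h : cs.IsLeftDescent x i) :
    bruhatLE cs (s i * x) x := by
  simpa using bruhatLE_reflection_mul cs (cs.isReflection_simple i) (x := s i * x)
    (by rwa [simple_mul_simple_cancel_left])

theorem simple_mul_bruhatLE_simple_mul {u t : W} {i : B} (ht : cs.IsReflection t)
    (h : ℓ (s i * u) < ℓ (s i * (t * u))) : bruhatLE cs (s i * u) (s i * (t * u)) := by
  have hconj : s i * t * s i * (s i * u) = s i * (t * u) := by simp [mul_assoc]
  rw [← hconj] at h ⊢
  exact bruhatLE_reflection_mul cs (by simpa using ht.conj (s i)) h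

theorem simple_mul_eq_or_bruhatLE {u t : W} {i : B} (ht : cs.IsReflection t)
    (hu : ℓ u < ℓ (t * u)) (hsu : ¬ cs.IsLeftDescent u i) :
    s i * u = t * u ∨ bruhatLE cs (s i * u) (s i * (t * u)) := by
  by_cases hlt : ℓ (s i * u) < ℓ (s i * (t * u))
  · exact Or.inr (simple_mul_bruhatLE_simple_mul cs ht hlt)
  left
  have hne : ℓ (s i * (t * u)) ≠ ℓ (s i * u) := by
    have := (ht.conj (s i)).length_mul_right_ne (s i * u)
    rwa [inv_simple, show s i * t * s i * (s i * u) = s i * (t * u) by simp [mul_assoc]] at this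
  have h₁ := cs.length_simple_mul (t * u) i
  rw [not_isLeftDescent_iff] at hsu
  have hstu : ℓ (s i * (t * u)) = ℓ u := by omega
  -- Now `ℓ (t u) = ℓ u + 1`. Deleting `u⁻¹ t u` from the reduced word `i :: σ` of `t u` yields
  -- `u`; deleting a letter of `σ` would make `s u` shorter than `u`, so the first letter goes.
  obtain ⟨σ, hσ, hσw⟩ := cs.exists_isReduced (s i * (t * u))
  have hσlen : σ.length = ℓ u := by rw [← hσ, ← hσw, hstu]
  have hπ : π (i :: σ) = t * u := by rw [wordProd_cons, ← hσw, simple_mul_simple_cancel_left]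
  have hπt : π (i :: σ) * (u⁻¹ * t * u) = u := by
    simp only [hπ, mul_assoc, mul_inv_cancel_left]
    rw [← mul_assoc, ht.mul_self, one_mul]
  have ht' : cs.IsReflection (u⁻¹ * t * u) := by simpa using ht.conj u⁻¹
  obtain ⟨j, hj, hju⟩ := ht'.exists_wordProd_eraseIdx_eq (by rwa [hπt, hπ])
  rw [hπt] at hju
  cases j with
  | zero =>
    rw [List.eraseIdx_cons_zero, ← hσw] at hju
    rw [← hju, simple_mul_simple_cancel_left, hju]
  | succ j =>
    rw [List.eraseIdx_cons_succ, wordProd_cons] at hju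
    have hle := cs.length_wordProd_le (σ.eraseIdx j)
    rw [← cs.simple_mul_simple_cancel_left i (w := π (σ.eraseIdx j)), hju,
      List.length_eraseIdx_of_lt (by simpa using hj)] at hle
    omega

theorem simple_mul_bruhatLE_of_isLeftDescent {x v : W} {i : B} (hxv : bruhatLE cs x v)
    (hv : cs.IsLeftDescent v i) : bruhatLE cs (s i * x) v := by
  induction hxv using Relation.ReflTransGen.head_induction_on with
  | refl => exact simple_mul_bruhatLE cs hv
  | @head x y hxy hyv ih =>
    by_cases hx : cs.IsLeftDescent x i
    · exact (simple_mul_bruhatLE cs hx).trans (.head hxy hyv)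
    obtain ⟨t, ht, rfl, hl⟩ := hxy.exists_reflection_mul
    rcases simple_mul_eq_or_bruhatLE cs ht hl hx with h | h
    · exact h ▸ hyv
    · exact h.trans ih

theorem bruhatLE_simple_mul_of_isLeftDescent {u x : W} {i : B} (hux : bruhatLE cs u x)
    (hu : ¬ cs.IsLeftDescent u i) (hx : cs.IsLeftDescent x i) : bruhatLE cs u (s i * x) := by
  induction hux with
  | refl => exact absurd hx hu
  | @tail y x huy hyx ih =>
    obtain ⟨t, ht, rfl, hl⟩ := hyx.exists_reflection_mul
    by_cases hy : cs.IsLeftDescent y i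
    · refine (ih hy).trans (simple_mul_bruhatLE_simple_mul cs ht ?_)
      rw [isLeftDescent_iff] at hy hx
      omega
    rcases simple_mul_eq_or_bruhatLE cs ht hl hy with h | h
    · rwa [← h, simple_mul_simple_cancel_left]
    · exact huy.trans ((bruhatLE_simple_mul cs hy).trans h)

theorem simple_mul_mem_bruhatInterval {u v x : W} {i : B} (hv : cs.IsLeftDescent v i)
    (hu : ¬ cs.IsLeftDescent u i) (hx : x ∈ bruhatInterval cs u v) :
    s i * x ∈ bruhatInterval cs u v := by
  obtain ⟨hux, hxv⟩ := hx
  by_cases hxi : cs.IsLeftDescent x i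
  · exact ⟨bruhatLE_simple_mul_of_isLeftDescent cs hux hu hxi,
      (simple_mul_bruhatLE cs hxi).trans hxv⟩
  · exact ⟨hux.trans (bruhatLE_simple_mul cs hxi),
      simple_mul_bruhatLE_of_isLeftDescent cs hxv hv⟩

end BruhatOrder

theorem stmt1_general (cs : CoxeterSystem M W) (u v : W) (i : B)
    (hv : cs.IsLeftDescent v i) (hu : ¬ cs.IsLeftDescent u i) :
    Set.BijOn (fun x => cs.simple i * x) (bruhatInterval cs u v) (bruhatInterval cs u v) ∧
    ∀ x ∈ bruhatInterval cs u v, ∀ y ∈ bruhatInterval cs u v,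
      ((∃ t : W, cs.IsReflection t ∧ y = x * t) ↔
        (∃ t : W, cs.IsReflection t ∧ cs.simple i * y = (cs.simple i * x) * t)) := by
  have hmaps : Set.MapsTo (cs.simple i * ·) (bruhatInterval cs u v) (bruhatInterval cs u v) :=
    fun x hx => simple_mul_mem_bruhatInterval cs hv hu hx
  refine ⟨⟨hmaps, mul_right_injective _ |>.injOn, fun y hy => ?_⟩, fun x _ y _ => ?_⟩
  · exact ⟨cs.simple i * y, hmaps hy, cs.simple_mul_simple_cancel_left i⟩
  · simp only [mul_assoc, mul_right_inj]

/-- Left multiplication by a simple reflection `s` with `s ∈ D_L(v) \ D_L(u)` restricts to an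
automorphism of the undirected Bruhat graph on `[u,v]`. -/
theorem stmt1 (cs : CoxeterSystem M W) (u v : W) (i : B)
    (huv : bruhatLE cs u v)
    (hv : cs.IsLeftDescent v i) (hu : ¬ cs.IsLeftDescent u i) :
    Set.BijOn (fun x => cs.simple i * x) (bruhatInterval cs u v) (bruhatInterval cs u v) ∧
    ∀ x ∈ bruhatInterval cs u v, ∀ y ∈ bruhatInterval cs u v,
      ((∃ t : W, cs.IsReflection t ∧ y = x * t) ↔
        (∃ t : W, cs.IsReflection t ∧ cs.simple i * y = (cs.simple i * x) * t)) :=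
  stmt1_general cs u v i hv hu
end

section
/- In a right-angled Coxeter group, if x₁, x₂ ⋖ y₁, y₂ form a butterfly and q is a common left descent of y₁ and y₂, then q is a common left descent of x₁ and x₂. -/
open CoxeterSystem

variable {B W : Type*} [Group W] {M : CoxeterMatrix B}

/-!
Let `y = x * t` cover `x` in Bruhat order, with `q` a left descent of `y` but not of `x`. If `ω` is
a reduced word for `x`, then `s_q x t = s_q y` is shorter than `s_q x = π (q :: ω)`, so by strong
exchange `t` occurs in the right inversion sequence of `q :: ω`. It cannot occur in that of `ω`
because `ℓ x < ℓ (x t)`, hence `t = x⁻¹ s_q x` and `y = s_q x`. So if `q` were not a left descent of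
`x`, both `y₁` and `y₂` would equal `s_q x`.

Strong exchange comes from the parity argument: the involutions `(t, ε) ↦ (s t s, ε + [t = s])`
of `W × ℤ/2` satisfy the Coxeter relations (for a right-angled group only the commutation of
commuting generators has to be checked), so they define an action of `W`. Its second coordinate
`η(w, t)` counts modulo 2 the occurrences of `t` in the right inversion sequence of any word for
`w`, and the cocycle identity together with `η(t, t) = 1` gives `η(w, t) = 1` whenever
`ℓ (w t) < ℓ w`.
-/

namespace CoxeterMatrix

def IsRightAngled (M : CoxeterMatrix B) : Prop :=
  ∀ i j : B, i ≠ j → M i j = 2 ∨ M i j = 0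

end CoxeterMatrix

theorem mul_mul_inv_eq_iff_eq_inv_mul_mul {G : Type*} [Group G] {w t u : G} :
    w * t * w⁻¹ = u ↔ t = w⁻¹ * u * w := by
  constructor <;> rintro rfl <;> group

namespace CoxeterSystem

variable (cs : CoxeterSystem M W)

local prefix:100 "s " => cs.simple
local prefix:100 "π " => cs.wordProd
local prefix:100 "ℓ " => cs.length
local prefix:100 "ris " => cs.rightInvSeq

theorem simple_mul_comm_of_coxeterMatrix_eq_two {i j : B} (h : M i j = 2) :
    s i * s j = s j * s i := by
  have h2 := cs.simple_mul_simple_pow i j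
  rw [h, sq, mul_eq_one_iff_eq_inv, mul_inv_rev, inv_simple, inv_simple] at h2
  exact h2

theorem simple_mul_mul_simple_eq_iff (i : B) (t u : W) :
    s i * t * s i = u ↔ t = s i * u * s i := by
  simpa only [inv_simple] using mul_mul_inv_eq_iff_eq_inv_mul_mul (w := s i) (t := t) (u := u)

open Classical in
noncomputable def simplePermFun (i : B) (p : W × ZMod 2) : W × ZMod 2 :=
  (s i * p.1 * s i, p.2 + if p.1 = s i then 1 else 0)

theorem simplePermFun_involutive (i : B) : Function.Involutive (cs.simplePermFun i) := by
  rintro ⟨t, e⟩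
  by_cases ht : t = s i
  · have h2 : (1 : ZMod 2) + 1 = 0 := rfl
    simp [simplePermFun, ht, add_assoc, h2]
  · have ht' : s i * t * s i ≠ s i := by
      rwa [Ne, simple_mul_mul_simple_eq_iff, simple_mul_simple_self, one_mul]
    simp only [simplePermFun, ht, ht', if_false, add_zero]
    simp [mul_assoc]

noncomputable def simplePerm (i : B) : Equiv.Perm (W × ZMod 2) :=
  (cs.simplePermFun_involutive i).toPerm

theorem simplePerm_apply (i : B) (p : W × ZMod 2) : cs.simplePerm i p = cs.simplePermFun i p :=
  rfl

theorem simplePerm_mul_self (i : B) : cs.simplePerm i * cs.simplePerm i = 1 :=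
  Equiv.ext (cs.simplePermFun_involutive i)

theorem simplePerm_commute {i j : B} (h : s i * s j = s j * s i) :
    Commute (cs.simplePerm i) (cs.simplePerm j) := by
  refine Equiv.ext fun ⟨t, e⟩ => ?_
  have hi : s i * t * s i = s j ↔ t = s j := by
    rw [simple_mul_mul_simple_eq_iff, h, mul_assoc, simple_mul_simple_self, mul_one]
  have hj : s j * t * s j = s i ↔ t = s i := by
    rw [simple_mul_mul_simple_eq_iff, ← h, mul_assoc, simple_mul_simple_self, mul_one]
  simp only [Equiv.Perm.mul_apply, simplePerm_apply, simplePermFun, Prod.mk.injEq]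
  constructor
  · calc s i * (s j * t * s j) * s i = (s i * s j) * t * (s j * s i) := by simp only [mul_assoc]
      _ = (s j * s i) * t * (s i * s j) := by rw [h]
      _ = s j * (s i * t * s i) * s j := by simp only [mul_assoc]
  · classical
    rw [if_congr hi rfl rfl, if_congr hj rfl rfl, add_right_comm]

theorem isLiftable_simplePerm (hra : M.IsRightAngled) : M.IsLiftable cs.simplePerm := by
  intro i j
  by_cases hij : i = j
  · rw [hij, M.diagonal, pow_one, simplePerm_mul_self]
  rcases hra i j hij with h | h
  · rw [h, (cs.simplePerm_commute (cs.simple_mul_comm_of_coxeterMatrix_eq_two h)).mul_pow, sq,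
      sq, simplePerm_mul_self, simplePerm_mul_self, one_mul]
  · rw [h, pow_zero]

noncomputable def permRep (hra : M.IsRightAngled) : W →* Equiv.Perm (W × ZMod 2) :=
  cs.lift ⟨cs.simplePerm, cs.isLiftable_simplePerm hra⟩

/-- By `reflParity_wordProd`, the parity of the number of occurrences of `t` in the right inversion
sequence of any word for `w`. -/
noncomputable def reflParity (hra : M.IsRightAngled) (w t : W) : ZMod 2 :=
  (cs.permRep hra w (t, 0)).2

section ReflParity

variable (hra : M.IsRightAngled)

open Classical in
theorem permRep_wordProd (ω : List B) (t : W) (e : ZMod 2) :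
    cs.permRep hra (π ω) (t, e) = (π ω * t * (π ω)⁻¹, e + ((ris ω).count t : ZMod 2)) := by
  induction ω with
  | nil => simp
  | cons i ω ih =>
    have hcond : π ω * t * (π ω)⁻¹ = s i ↔ ((π ω)⁻¹ * s i * π ω == t) = true := by
      rw [beq_iff_eq, mul_mul_inv_eq_iff_eq_inv_mul_mul, eq_comm]
    rw [wordProd_cons, map_mul, Equiv.Perm.mul_apply, ih, permRep, lift_apply_simple,
      simplePerm_apply, simplePermFun, rightInvSeq, List.count_cons, if_congr hcond rfl rfl]
    push_cast
    simp only [mul_inv_rev, inv_simple, mul_assoc, add_assoc]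

open Classical in
theorem reflParity_wordProd (ω : List B) (t : W) :
    cs.reflParity hra (π ω) t = ((ris ω).count t : ZMod 2) := by
  rw [reflParity, permRep_wordProd, zero_add]

theorem permRep_apply (w t : W) (e : ZMod 2) :
    cs.permRep hra w (t, e) = (w * t * w⁻¹, e + cs.reflParity hra w t) := by
  classical
  obtain ⟨ω, rfl⟩ := cs.wordProd_surjective w
  rw [permRep_wordProd, reflParity_wordProd]

theorem reflParity_mul (u v t : W) :
    cs.reflParity hra (u * v) t = cs.reflParity hra v t + cs.reflParity hra u (v * t * v⁻¹) := by
  rw [reflParity, map_mul, Equiv.Perm.mul_apply, permRep_apply, permRep_apply, zero_add]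

theorem reflParity_one (t : W) : cs.reflParity hra 1 t = 0 := by
  simp [reflParity]

theorem reflParity_simple_self (i : B) : cs.reflParity hra (s i) (s i) = 1 := by
  simp [reflParity, permRep, simplePerm_apply, simplePermFun]

theorem reflParity_self {t : W} (ht : cs.IsReflection t) : cs.reflParity hra t t = 1 := by
  obtain ⟨v, i, rfl⟩ := ht
  have hconj : v⁻¹ * (v * s i * v⁻¹) * v⁻¹⁻¹ = s i := by group
  have h₁ := cs.reflParity_mul hra (v * s i) v⁻¹ (v * s i * v⁻¹)
  have h₂ := cs.reflParity_mul hra v (s i) (s i)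
  have h₃ := cs.reflParity_mul hra v v⁻¹ (v * s i * v⁻¹)
  rw [hconj] at h₁ h₃
  rw [mul_inv_cancel, reflParity_one] at h₃
  rw [mul_inv_cancel_right, reflParity_simple_self] at h₂
  rw [h₁, h₂]
  linear_combination -h₃

theorem reflParity_eq_zero_of_length_lt_length_mul {w t : W} (h : ℓ w < ℓ (w * t)) :
    cs.reflParity hra w t = 0 := by
  classical
  obtain ⟨ω, hω, rfl⟩ := cs.exists_isReduced w
  rw [reflParity_wordProd, List.count_eq_zero.mpr, Nat.cast_zero]
  intro hmem
  exact absurd (cs.isRightInversion_of_mem_rightInvSeq hω hmem).2 (not_lt.mpr h.le)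

theorem reflParity_eq_one_of_length_mul_lt {w t : W} (ht : cs.IsReflection t)
    (h : ℓ (w * t) < ℓ w) : cs.reflParity hra w t = 1 := by
  have hw : w = w * t * t := by rw [mul_assoc, ht.mul_self, mul_one]
  have hpos : ℓ (w * t) < ℓ (w * t * t) := by rwa [← hw]
  rw [hw, reflParity_mul, cs.reflParity_self hra ht, mul_inv_cancel_right,
    reflParity_eq_zero_of_length_lt_length_mul cs hra hpos, add_zero]

end ReflParity

/-- The strong exchange condition. -/
theorem mem_rightInvSeq_of_length_mul_lt (hra : M.IsRightAngled) {ω : List B} {t : W}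
    (ht : cs.IsReflection t) (h : ℓ (π ω * t) < ℓ (π ω)) : t ∈ ris ω := by
  classical
  have hodd := cs.reflParity_eq_one_of_length_mul_lt hra ht h
  rw [reflParity_wordProd] at hodd
  by_contra hmem
  rw [List.count_eq_zero.mpr hmem, Nat.cast_zero] at hodd
  exact zero_ne_one hodd

theorem mul_eq_simple_mul_of_not_isLeftDescent (hra : M.IsRightAngled) {x t : W}
    (ht : cs.IsReflection t) (hlen : ℓ (x * t) = ℓ x + 1) {q : B} (hqy : cs.IsLeftDescent (x * t) q)
    (hqx : ¬ cs.IsLeftDescent x q) : x * t = s q * x := by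
  obtain ⟨ω, hω, rfl⟩ := cs.exists_isReduced x
  have hlt : ℓ (π (q :: ω) * t) < ℓ (π (q :: ω)) := by
    rw [wordProd_cons, mul_assoc, cs.not_isLeftDescent_iff.mp hqx, ← hlen]
    exact hqy
  rcases List.mem_cons.mp (cs.mem_rightInvSeq_of_length_mul_lt hra ht hlt) with hhead | hmem
  · rw [hhead]
    group
  · exact absurd (cs.isRightInversion_of_mem_rightInvSeq hω hmem).2 (by omega)

end CoxeterSystem

section Bruhat

variable {cs : CoxeterSystem M W}

theorem bruhatLE_length_le {x y : W} (h : bruhatLE cs x y) : cs.length x ≤ cs.length y := by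
  induction h with
  | refl => exact le_rfl
  | tail _ hstep ih => exact ih.trans hstep.choose_spec.2.2.le

theorem bruhatLE_eq_of_length_le {x y : W} (h : bruhatLE cs x y)
    (hlen : cs.length y ≤ cs.length x) : x = y := by
  rcases Relation.ReflTransGen.cases_head h with rfl | ⟨z, ⟨_, _, _, hxz⟩, hzy⟩
  · rfl
  · exact absurd (bruhatLE_length_le hzy) (by omega)

theorem bruhatCovBy_exists_isReflection {x y : W} (h : bruhatCovBy cs x y) :
    ∃ t, cs.IsReflection t ∧ y = x * t := by
  rcases Relation.ReflTransGen.cases_head h.1 with rfl | ⟨z, ⟨t, ht, rfl, hxz⟩, hzy⟩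
  · exact absurd h.2 (by omega)
  · exact ⟨t, ht, (bruhatLE_eq_of_length_le hzy (by have := h.2; omega)).symm⟩

end Bruhat

theorem isLeftDescent_of_bruhatCovBy_of_bruhatCovBy (cs : CoxeterSystem M W)
    (hra : M.IsRightAngled) {x y₁ y₂ : W} (hy : y₁ ≠ y₂) (h₁ : bruhatCovBy cs x y₁)
    (h₂ : bruhatCovBy cs x y₂) {q : B} (hq₁ : cs.IsLeftDescent y₁ q)
    (hq₂ : cs.IsLeftDescent y₂ q) : cs.IsLeftDescent x q := by
  by_contra hqx
  have hy_eq : ∀ y, bruhatCovBy cs x y → cs.IsLeftDescent y q → y = cs.simple q * x := by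
    intro y h hq
    obtain ⟨t, ht, rfl⟩ := bruhatCovBy_exists_isReflection h
    exact cs.mul_eq_simple_mul_of_not_isLeftDescent hra ht h.2 hq hqx
  exact hy ((hy_eq y₁ h₁ hq₁).trans (hy_eq y₂ h₂ hq₂).symm)

theorem stmt11_general (cs : CoxeterSystem M W)
    (hra : ∀ i j : B, i ≠ j → M i j = 2 ∨ M i j = 0)
    (x₁ x₂ y₁ y₂ : W) (hy : y₁ ≠ y₂)
    (h11 : bruhatCovBy cs x₁ y₁) (h12 : bruhatCovBy cs x₁ y₂)
    (h21 : bruhatCovBy cs x₂ y₁) (h22 : bruhatCovBy cs x₂ y₂)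
    (q : B) (hq₁ : cs.IsLeftDescent y₁ q) (hq₂ : cs.IsLeftDescent y₂ q) :
    cs.IsLeftDescent x₁ q ∧ cs.IsLeftDescent x₂ q :=
  ⟨isLeftDescent_of_bruhatCovBy_of_bruhatCovBy cs hra hy h11 h12 hq₁ hq₂,
    isLeftDescent_of_bruhatCovBy_of_bruhatCovBy cs hra hy h21 h22 hq₁ hq₂⟩

/-- In a right-angled Coxeter group, if `x₁, x₂ ⋖ y₁, y₂` form a butterfly and `q` is a
common left descent of `y₁` and `y₂`, then `q` is a common left descent of `x₁` and `x₂`. -/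
theorem stmt11 (cs : CoxeterSystem M W)
    (hra : ∀ i j : B, i ≠ j → M i j = 2 ∨ M i j = 0)
    (x₁ x₂ y₁ y₂ : W) (hx : x₁ ≠ x₂) (hy : y₁ ≠ y₂)
    (h11 : bruhatCovBy cs x₁ y₁) (h12 : bruhatCovBy cs x₁ y₂)
    (h21 : bruhatCovBy cs x₂ y₁) (h22 : bruhatCovBy cs x₂ y₂)
    (q : B) (hq₁ : cs.IsLeftDescent y₁ q) (hq₂ : cs.IsLeftDescent y₂ q) :
    cs.IsLeftDescent x₁ q ∧ cs.IsLeftDescent x₂ q :=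
  stmt11_general cs hra x₁ x₂ y₁ y₂ hy h11 h12 h21 h22 q hq₁ hq₂
end

section
/- Let w ∈ Sₙ be Bruhat irreducible. If w is right-almost-reducible at i and w is left-almost-reducible at j (equivalently, w⁻¹ is right-almost-reducible at j), then i ≠ j and the adjacent transpositions s_i and s_j commute, i.e., |i − j| ≥ 2. -/
/-- The number of inversions (Coxeter length) of a permutation of `Fin n`. -/
def invNum {n : ℕ} (w : Equiv.Perm (Fin n)) : ℕ :=
  (Finset.univ.filter (fun p : Fin n × Fin n => p.1 < p.2 ∧ w p.2 < w p.1)).card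

/-- The simple transposition `s_i = (i, i+1)` in `S_{n+1}` (0-indexed). -/
def simpleS {n : ℕ} (i : Fin n) : Equiv.Perm (Fin (n + 1)) :=
  Equiv.swap i.castSucc i.succ

/-- `i` is a left descent of `w`. -/
def isLeftDescentS {n : ℕ} (w : Equiv.Perm (Fin (n + 1))) (i : Fin n) : Prop :=
  invNum (simpleS i * w) < invNum w

/-- `i` is a right descent of `w`. -/
def isRightDescentS {n : ℕ} (w : Equiv.Perm (Fin (n + 1))) (i : Fin n) : Prop :=
  invNum (w * simpleS i) < invNum w

/-- The support of `w`: the simple transpositions appearing in some reduced word for `w`. -/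
def suppS {n : ℕ} (w : Equiv.Perm (Fin (n + 1))) : Set (Fin n) :=
  {i | ∃ l : List (Fin n), w = (l.map simpleS).prod ∧ l.length = invNum w ∧ i ∈ l}

/-- The parabolic subgroup of `S_{n+1}` generated by the simple transpositions in `J`. -/
def parabolicS {n : ℕ} (J : Set (Fin n)) : Subgroup (Equiv.Perm (Fin (n + 1))) :=
  Subgroup.closure (simpleS '' J)

/-- `w` is Bruhat irreducible: it has full support and admits no factorization into two
nontrivial factors with disjoint supports. -/
def bruhatIrreducibleS {n : ℕ} (w : Equiv.Perm (Fin (n + 1))) : Prop :=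
  suppS w = Set.univ ∧
  ¬ ∃ w' w'' : Equiv.Perm (Fin (n + 1)),
      w = w' * w'' ∧ Disjoint (suppS w') (suppS w'') ∧ w' ≠ 1 ∧ w'' ≠ 1

/-- `w` is right-almost-reducible at `i`: the parabolic decomposition `w = w^J · w_J` with
`J = {s_i, …, s_{n-1}}` is a BP-decomposition, `supp(w^J) ∩ J = {s_i}`, and `s_i` is
neither a left nor a right descent of `w`. -/
def rightAlmostReducibleS {n : ℕ} (w : Equiv.Perm (Fin (n + 1))) (i : Fin n) : Prop :=
  ∃ a b : Equiv.Perm (Fin (n + 1)),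
    w = a * b ∧ b ∈ parabolicS {j | i ≤ j} ∧
    (∀ x ∈ parabolicS {j : Fin n | i ≤ j}, invNum a ≤ invNum (a * x)) ∧
    (suppS a ∩ {j | i ≤ j} ⊆ {j | isLeftDescentS b j}) ∧
    suppS a ∩ {j | i ≤ j} = {i} ∧
    ¬ isLeftDescentS w i ∧ ¬ isRightDescentS w i

/-- `w` is left-almost-reducible at `j` iff `w⁻¹` is right-almost-reducible at `j`. -/
def leftAlmostReducibleS {n : ℕ} (w : Equiv.Perm (Fin (n + 1))) (j : Fin n) : Prop :=
  rightAlmostReducibleS w⁻¹ j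

/-- `w` contains the pattern `p`. -/
def containsPattern {n k : ℕ} (w : Equiv.Perm (Fin n)) (p : Equiv.Perm (Fin k)) : Prop :=
  ∃ f : Fin k → Fin n, StrictMono f ∧ ∀ x y : Fin k, p x < p y ↔ w (f x) < w (f y)

/-
Write `w = a * b` for the decomposition witnessing right-almost-reducibility at `i`. The letters
of a reduced word of `a` are at most `i`, so `a` fixes every point beyond `i + 1`; as `s_i` lies in
the support of `a`, some inversion of `a` straddles `i`, and with `a i < a (i + 1)` this forces
`a r = i + 1` for some `r < i`. Since `b` fixes everything below `i`, also `w r = i + 1`.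
Moreover `w i > i + 1`: otherwise `b i = i + 1` (as `i` is a left descent of `b`), and either
`b = s_i`, making `i` a right descent of `w = a * s_i`, or `w = (a * s_i) * (s_i * b)` splits into
nontrivial factors supported on `{s_k | k ≤ i}` and `{s_k | k > i}`, against irreducibility.
Applying these two facts to `w` at `i` and to `w⁻¹` at `j`, and using that `i` is not a left
descent of `w`, excludes `j ∈ {i - 1, i, i + 1}`.
-/

open Equiv

section Inversions

variable {n : ℕ}

theorem invNum_inv (u : Perm (Fin n)) : invNum u⁻¹ = invNum u := by
  refine Finset.card_nbij' (fun x => (u⁻¹ x.2, u⁻¹ x.1)) (fun x => (u x.2, u x.1))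
    ?_ ?_ ?_ ?_ <;> intro x <;> simp <;> tauto

theorem invNum_one : invNum (1 : Perm (Fin n)) = 0 := by
  simp only [invNum, Perm.one_apply]
  exact Finset.card_eq_zero.2 (Finset.filter_eq_empty_iff.2 fun x _ h => lt_asymm h.1 h.2)

theorem simpleS_inv (k : Fin n) : (simpleS k)⁻¹ = simpleS k :=
  swap_inv _ _

theorem simpleS_mul_self (k : Fin n) : simpleS k * simpleS k = 1 :=
  swap_mul_self _ _

theorem simpleS_apply_le_castSucc_iff {k x : Fin n} (h : x ≠ k) (p : Fin (n + 1)) :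
    simpleS x p ≤ k.castSucc ↔ p ≤ k.castSucc := by
  simp only [simpleS, swap_apply_def]
  split_ifs <;> grind

theorem invNum_mul_simpleS_of_lt {u : Perm (Fin (n + 1))} {k : Fin n}
    (h : u k.castSucc < u k.succ) : invNum (u * simpleS k) = invNum u + 1 := by
  set s := simpleS k
  -- `(p, q) ↦ (s p, s q)` carries the inversions of `u * s` onto those of `u` together with
  -- the image `(k + 1, k)` of `(k, k + 1)`
  have key : (Finset.univ.filter fun x : Fin (n + 1) × Fin (n + 1) =>
        x.1 < x.2 ∧ (u * s) x.2 < (u * s) x.1).map (prodCongr s s).toEmbedding =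
      insert (k.succ, k.castSucc)
        (Finset.univ.filter fun x : Fin (n + 1) × Fin (n + 1) => x.1 < x.2 ∧ u x.2 < u x.1) := by
    ext ⟨p, q⟩
    simp only [Perm.coe_mul, Function.comp_apply, Finset.mem_map_equiv, prodCongr_symm,
      prodCongr_apply, Prod.map_apply, Finset.mem_filter, Finset.mem_univ, true_and,
      Finset.mem_insert, Prod.mk.injEq, s, simpleS, symm_swap, swap_apply_self]
    rw [swap_apply_def, swap_apply_def]
    split_ifs <;> grind
  have hnotMem : (k.succ, k.castSucc) ∉
      Finset.univ.filter fun x : Fin (n + 1) × Fin (n + 1) => x.1 < x.2 ∧ u x.2 < u x.1 := by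
    simp [Fin.castSucc_lt_succ.not_gt]
  rw [invNum, ← Finset.card_map, key, Finset.card_insert_of_notMem hnotMem, invNum]

theorem invNum_mul_simpleS_of_gt {u : Perm (Fin (n + 1))} {k : Fin n}
    (h : u k.succ < u k.castSucc) : invNum (u * simpleS k) + 1 = invNum u := by
  have h' : (u * simpleS k) k.castSucc < (u * simpleS k) k.succ := by
    simpa [simpleS] using h
  rw [← invNum_mul_simpleS_of_lt h', mul_assoc, simpleS_mul_self, mul_one]

theorem invNum_mul_simpleS_le (u : Perm (Fin (n + 1))) (k : Fin n) :
    invNum (u * simpleS k) ≤ invNum u + 1 := by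
  rcases lt_or_gt_of_ne (u.injective.ne k.castSucc_lt_succ.ne) with h | h
  · exact (invNum_mul_simpleS_of_lt h).le
  · have := invNum_mul_simpleS_of_gt h
    omega

theorem isRightDescentS_iff {u : Perm (Fin (n + 1))} {k : Fin n} :
    isRightDescentS u k ↔ u k.succ < u k.castSucc := by
  rcases lt_or_gt_of_ne (u.injective.ne k.castSucc_lt_succ.ne) with h | h
  · simp [isRightDescentS, invNum_mul_simpleS_of_lt h, h.le]
  · simp only [isRightDescentS, ← invNum_mul_simpleS_of_gt h, h, iff_true]
    omega

theorem isLeftDescentS_iff {u : Perm (Fin (n + 1))} {k : Fin n} :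
    isLeftDescentS u k ↔ u⁻¹ k.succ < u⁻¹ k.castSucc := by
  rw [← isRightDescentS_iff, isLeftDescentS, isRightDescentS, ← invNum_inv (simpleS k * u),
    mul_inv_rev, simpleS_inv, invNum_inv u]

theorem not_isRightDescentS_iff {u : Perm (Fin (n + 1))} {k : Fin n} :
    ¬isRightDescentS u k ↔ u k.castSucc < u k.succ := by
  rw [isRightDescentS_iff, not_lt, (u.injective.ne k.castSucc_lt_succ.ne).le_iff_lt]

theorem not_isLeftDescentS_iff {u : Perm (Fin (n + 1))} {k : Fin n} :
    ¬isLeftDescentS u k ↔ u⁻¹ k.castSucc < u⁻¹ k.succ := by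
  rw [isLeftDescentS_iff, not_lt, (u⁻¹.injective.ne k.castSucc_lt_succ.ne).le_iff_lt]

end Inversions

theorem not_apply_of_forall_apply_eq {α : Type*} {σ : Perm α} {P : α → Prop}
    (h : ∀ x, P x → σ x = x) {x : α} (hx : ¬P x) : ¬P (σ x) :=
  fun hσx => hx (σ.injective (h _ hσx) ▸ hσx)

section Support

variable {n : ℕ}

theorem invNum_list_prod_le (l : List (Fin n)) :
    invNum ((l.map simpleS).prod : Perm (Fin (n + 1))) ≤ l.length := by
  induction l using List.reverseRecOn with
  | nil => simp [invNum_one]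
  | append_singleton l x ih =>
    simp only [List.map_append, List.map_singleton, List.prod_append, List.prod_singleton,
      List.length_append, List.length_singleton]
    exact (invNum_mul_simpleS_le _ x).trans (by omega)

theorem exists_crossing_of_reduced (l : List (Fin n))
    (hl : invNum ((l.map simpleS).prod : Perm (Fin (n + 1))) = l.length) {k : Fin n}
    (hk : k ∈ l) :
    ∃ p q, p ≤ k.castSucc ∧ k.castSucc < q ∧
      (l.map simpleS).prod q < ((l.map simpleS).prod : Perm (Fin (n + 1))) p := by
  induction l using List.reverseRecOn with
  | nil => simp at hk
  | append_singleton l x ih =>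
    simp only [List.map_append, List.map_singleton, List.prod_append, List.prod_singleton,
      List.length_append, List.length_singleton] at hl ⊢
    have hu := invNum_list_prod_le (n := n) l
    set u : Perm (Fin (n + 1)) := (l.map simpleS).prod
    -- a word is reduced only if each of its letters is an ascent of the preceding prefix
    have hasc : u x.castSucc < u x.succ := by
      refine (lt_or_gt_of_ne (u.injective.ne x.castSucc_lt_succ.ne)).resolve_right fun hdesc => ?_
      have := invNum_mul_simpleS_of_gt hdesc
      omega
    by_cases hkx : k = x
    · subst hkx
      exact ⟨k.castSucc, k.succ, le_rfl, k.castSucc_lt_succ, by simpa [simpleS] using hasc⟩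
    · have hkl : k ∈ l := by simpa [hkx] using hk
      obtain ⟨p, q, hp, hq, hqp⟩ :=
        ih (by have := invNum_mul_simpleS_of_lt hasc; omega) hkl
      refine ⟨simpleS x p, simpleS x q, (simpleS_apply_le_castSucc_iff (Ne.symm hkx) p).2 hp,
        not_le.1 fun h => hq.not_ge ((simpleS_apply_le_castSucc_iff (Ne.symm hkx) q).1 h), ?_⟩
      simpa [simpleS] using hqp

theorem exists_crossing_of_mem_suppS {u : Perm (Fin (n + 1))} {k : Fin n} (hk : k ∈ suppS u) :
    ∃ p q, p ≤ k.castSucc ∧ k.castSucc < q ∧ u q < u p := by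
  obtain ⟨l, rfl, hl, hkl⟩ := hk
  exact exists_crossing_of_reduced l hl.symm hkl

theorem notMem_suppS_of_forall_le_iff {u : Perm (Fin (n + 1))} {k : Fin n}
    (h : ∀ p, u p ≤ k.castSucc ↔ p ≤ k.castSucc) : k ∉ suppS u := fun hk =>
  let ⟨p, q, hp, hq, hqp⟩ := exists_crossing_of_mem_suppS hk
  hqp.not_gt (((h p).2 hp).trans_lt (not_le.1 fun hq' => hq.not_ge ((h q).1 hq')))

theorem suppS_subset_of_forall_lt_apply_eq {u : Perm (Fin (n + 1))} {c : Fin (n + 1)}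
    (h : ∀ p, c < p → u p = p) : suppS u ⊆ {k | k.castSucc < c} := by
  intro k hk
  by_contra hck
  refine notMem_suppS_of_forall_le_iff (fun p => ?_) hk
  by_cases hp : c < p
  · rw [h p hp]
  · have := not_apply_of_forall_apply_eq h hp
    grind

theorem suppS_subset_of_forall_le_apply_eq {u : Perm (Fin (n + 1))} {c : Fin (n + 1)}
    (h : ∀ p, p ≤ c → u p = p) : suppS u ⊆ {k | c < k.castSucc} := by
  intro k hk
  by_contra hck
  refine notMem_suppS_of_forall_le_iff (fun p => ?_) hk
  by_cases hp : p ≤ c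
  · rw [h p hp]
  · have := not_apply_of_forall_apply_eq h hp
    grind

theorem suppS_inv (u : Perm (Fin (n + 1))) : suppS u⁻¹ = suppS u := by
  suffices h : ∀ v : Perm (Fin (n + 1)), suppS v ⊆ suppS v⁻¹ from
    (h u).antisymm' (by simpa using h u⁻¹)
  rintro v k ⟨l, rfl, hl, hk⟩
  refine ⟨l.reverse, ?_, by rw [List.length_reverse, invNum_inv, hl], List.mem_reverse.2 hk⟩
  simp [List.prod_inv_reverse, List.map_reverse, Function.comp_def, simpleS_inv]

end Support

section Parabolic

variable {n : ℕ}

theorem list_prod_mem_parabolicS {J : Set (Fin n)} {l : List (Fin n)} (h : ∀ k ∈ l, k ∈ J) :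
    ((l.map simpleS).prod : Perm (Fin (n + 1))) ∈ parabolicS J :=
  Subgroup.list_prod_mem _ <| List.forall_mem_map.2 fun k hk =>
    Subgroup.subset_closure ⟨k, h k hk, rfl⟩

theorem apply_eq_self_of_mem_parabolicS {J : Set (Fin n)} {b : Perm (Fin (n + 1))}
    (hb : b ∈ parabolicS J) {p : Fin (n + 1)} (hp : ∀ k ∈ J, p ≠ k.castSucc ∧ p ≠ k.succ) :
    b p = p := by
  have : parabolicS J ≤ MulAction.stabilizer (Perm (Fin (n + 1))) p := by
    refine (Subgroup.closure_le _).2 ?_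
    rintro _ ⟨k, hk, rfl⟩
    exact swap_apply_of_ne_of_ne (hp k hk).1 (hp k hk).2
  exact this hb

theorem bruhatIrreducibleS_inv {w : Perm (Fin (n + 1))} (h : bruhatIrreducibleS w) :
    bruhatIrreducibleS w⁻¹ := by
  refine ⟨by rw [suppS_inv]; exact h.1, ?_⟩
  rintro ⟨u, v, hw, hd, hu, hv⟩
  refine h.2 ⟨v⁻¹, u⁻¹, by rw [← inv_inv w, hw, mul_inv_rev], ?_, inv_ne_one.2 hv, inv_ne_one.2 hu⟩
  rwa [suppS_inv, suppS_inv, disjoint_comm]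

end Parabolic

section AlmostReducible

variable {n : ℕ}

theorem rightAlmostReducibleS.exists_factorization {w : Perm (Fin (n + 1))} {i : Fin n}
    (hR : rightAlmostReducibleS w i) :
    ∃ a b : Perm (Fin (n + 1)), w = a * b ∧ (∀ p, i.succ < p → a p = p) ∧
      a i.castSucc < a i.succ ∧ i ∈ suppS a ∧ (∀ p, p < i.castSucc → b p = p) ∧
      b⁻¹ i.succ < b⁻¹ i.castSucc := by
  obtain ⟨a, b, rfl, hbJ, hmin, hdesc, hsupp, -, -⟩ := hR
  have hi : i ∈ suppS a ∩ {j | i ≤ j} := hsupp ▸ rfl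
  obtain ⟨l, hal, hlen, -⟩ := hi.1
  have haJ : a ∈ parabolicS {k | k ≤ i} := hal ▸ list_prod_mem_parabolicS fun k hk => by
    by_contra hki
    have hk' : k ∈ suppS a ∩ {j | i ≤ j} :=
      ⟨⟨l, hal, hlen, hk⟩, show i ≤ k from (not_le.1 hki).le⟩
    rw [hsupp, Set.mem_singleton_iff] at hk'
    exact hki hk'.le
  have hasc : ¬isRightDescentS a i :=
    (hmin (simpleS i) (Subgroup.subset_closure ⟨i, le_refl i, rfl⟩)).not_gt
  refine ⟨a, b, rfl, fun p hp => apply_eq_self_of_mem_parabolicS haJ fun k hk => ?_,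
    not_isRightDescentS_iff.1 hasc, hi.1,
    fun p hp => apply_eq_self_of_mem_parabolicS hbJ fun k hk => ?_, isLeftDescentS_iff.1 (hdesc hi)⟩
  · change k ≤ i at hk
    grind
  · change i ≤ k at hk
    grind

theorem exists_lt_castSucc_apply_eq_succ_of_mem_suppS {a : Perm (Fin (n + 1))} {i : Fin n}
    (hfix : ∀ p, i.succ < p → a p = p) (hasc : a i.castSucc < a i.succ) (hi : i ∈ suppS a) :
    ∃ r < i.castSucc, a r = i.succ := by
  obtain ⟨p, q, hp, hq, hqp⟩ := exists_crossing_of_mem_suppS hi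
  have hap : a p ≤ i.succ := not_lt.1 (not_apply_of_forall_apply_eq hfix (by grind))
  have hq' : q = i.succ := by
    by_contra hne
    have := hfix q (by grind)
    grind
  subst hq'
  refine ⟨a⁻¹ i.succ, ?_, a.apply_symm_apply _⟩
  have har : a (a⁻¹ i.succ) = i.succ := a.apply_symm_apply _
  have : ¬i.succ < a⁻¹ i.succ := fun h => by grind
  grind

theorem rightAlmostReducibleS.exists_lt_castSucc_apply_eq_succ {w : Perm (Fin (n + 1))}
    {i : Fin n} (hR : rightAlmostReducibleS w i) : ∃ r < i.castSucc, w r = i.succ := by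
  obtain ⟨a, b, rfl, ha, hasc, hi, hb, -⟩ := hR.exists_factorization
  obtain ⟨r, hr, har⟩ := exists_lt_castSucc_apply_eq_succ_of_mem_suppS ha hasc hi
  exact ⟨r, hr, by rw [Perm.mul_apply, hb r hr, har]⟩

theorem not_bruhatIrreducibleS_mul {a b : Perm (Fin (n + 1))} {i : Fin n}
    (ha : ∀ p, i.succ < p → a p = p) (hasc : a i.castSucc < a i.succ)
    (hb : ∀ p, p < i.castSucc → b p = p) (hbi : b i.castSucc = i.succ)
    (hsb : simpleS i * b ≠ 1) : ¬bruhatIrreducibleS (a * b) := by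
  have hfix₁ : ∀ p, i.succ < p → (a * simpleS i) p = p := fun p hp => by
    rw [Perm.mul_apply, simpleS, swap_apply_of_ne_of_ne (by grind) (by grind), ha p hp]
  have hfix₂ : ∀ p, p ≤ i.castSucc → (simpleS i * b) p = p := fun p hp => by
    obtain hp | rfl := hp.lt_or_eq
    · rw [Perm.mul_apply, hb p hp, simpleS, swap_apply_of_ne_of_ne (by grind) (by grind)]
    · rw [Perm.mul_apply, hbi, simpleS, swap_apply_right]
  have hne : a * simpleS i ≠ 1 := fun h => by
    rw [mul_eq_one_iff_eq_inv, simpleS_inv] at h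
    simp only [h, simpleS, swap_apply_left, swap_apply_right] at hasc
    exact i.castSucc_lt_succ.not_gt hasc
  refine fun hirr => hirr.2 ⟨a * simpleS i, simpleS i * b, ?_, ?_, hne, hsb⟩
  · rw [mul_assoc, ← mul_assoc (simpleS i), simpleS_mul_self, one_mul]
  · refine Set.disjoint_of_subset (suppS_subset_of_forall_lt_apply_eq hfix₁)
      (suppS_subset_of_forall_le_apply_eq hfix₂) (Set.disjoint_left.2 fun k hk hk' => ?_)
    change k.castSucc < i.succ at hk
    change i.castSucc < k.castSucc at hk'
    grind

theorem rightAlmostReducibleS.succ_lt_apply_castSucc {w : Perm (Fin (n + 1))} {i : Fin n}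
    (hirr : bruhatIrreducibleS w) (hR : rightAlmostReducibleS w i) : i.succ < w i.castSucc := by
  obtain ⟨-, -, -, -, -, -, -, -, hnr⟩ := id hR
  obtain ⟨a, b, rfl, ha, hasc, -, hb, hdesc⟩ := hR.exists_factorization
  have hb_ge : i.castSucc ≤ b i.castSucc := not_lt.1 (not_apply_of_forall_apply_eq hb (lt_irrefl _))
  have hb_ne : b i.castSucc ≠ i.castSucc := fun h => by
    have hbinv : ∀ p, p < i.castSucc → b⁻¹ p = p := fun p hp =>
      Perm.inv_eq_iff_eq.2 (hb p hp).symm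
    have := not_apply_of_forall_apply_eq hbinv (x := i.succ) (by grind)
    rw [Perm.inv_eq_iff_eq.2 h.symm] at hdesc
    grind
  obtain hbi | hbi := (Fin.castSucc_lt_iff_succ_le.1 (hb_ge.lt_of_ne' hb_ne)).eq_or_lt
  · exfalso
    by_cases hsb : simpleS i * b = 1
    · rw [eq_inv_of_mul_eq_one_right hsb, simpleS_inv, not_isRightDescentS_iff] at hnr
      simp only [Perm.mul_apply, simpleS, swap_apply_left, swap_apply_right] at hnr
      exact hasc.not_gt hnr
    · exact not_bruhatIrreducibleS_mul ha hasc hb hbi.symm hsb hirr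
  · rw [Perm.mul_apply, ha _ hbi]
    exact hbi

end AlmostReducible

/-- If a Bruhat irreducible `w ∈ S_{n+1}` is right-almost-reducible at `i` and
left-almost-reducible at `j`, then `i ≠ j` and `s_i`, `s_j` commute, i.e. `|i - j| ≥ 2`. -/
theorem stmt18 {n : ℕ} (w : Equiv.Perm (Fin (n + 1))) (i j : Fin n)
    (hirr : bruhatIrreducibleS w)
    (hR : rightAlmostReducibleS w i)
    (hL : leftAlmostReducibleS w j) :
    i ≠ j ∧ (i.val + 2 ≤ j.val ∨ j.val + 2 ≤ i.val) := by
  obtain ⟨p, hp, hwp⟩ := hR.exists_lt_castSucc_apply_eq_succ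
  obtain ⟨q, hq, hwq⟩ := rightAlmostReducibleS.exists_lt_castSucc_apply_eq_succ hL
  have hwi : i.succ < w i.castSucc := hR.succ_lt_apply_castSucc hirr
  have hwj : j.succ < w⁻¹ j.castSucc :=
    rightAlmostReducibleS.succ_lt_apply_castSucc (bruhatIrreducibleS_inv hirr) hL
  obtain ⟨-, -, -, -, -, -, -, hnl, -⟩ := hR
  have hasc : w⁻¹ i.castSucc < w⁻¹ i.succ := not_isLeftDescentS_iff.1 hnl
  have hp' : w⁻¹ i.succ = p := Perm.inv_eq_iff_eq.2 hwp.symm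
  have hq' : w j.succ = q := Perm.eq_inv_iff_eq.1 hwq.symm
  -- `j = i`: `i + 1 < w⁻¹ i < p < i`; `j = i + 1`: `i + 2 < w⁻¹ (i + 1) = p < i`;
  -- `i = j + 1`: `j + 2 < w (j + 1) = q < j`
  grind
end
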